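/- arXiv:1007.2905 — 7 statements merged into one kernel-verified Lean document; each statement's English description precedes it below -/
import Mathlib

section
/- Let 𝒜 ⊆ ℂ^{n×n} be a matrix *-algebra and let A ∈ 𝒜 be Hermitian. Then A is positive semidefinite if and only if ⟨A, B⟩ = trace(B*A) ≥ 0 for every positive semidefinite B ∈ 𝒜. (In other words, the cone of positive semidefinite matrices in 𝒜 is self-dual inside the real space of Hermitian elements of 𝒜.) -/
/-!
If `A = Cᴴ * C` and `B` is positive semidefinite, then `trace (B * A) = trace (C * B * Cᴴ) ≥ 0`.
Conversely, the negative part `A⁻` is a continuous function of `A` vanishing at `0`, so it lies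
in the closure of the non-unital algebra generated by `A` (no adjoints are needed, as `A` is
self-adjoint), hence in the closed subspace `𝒜`. It is positive semidefinite and `A⁻ * A⁺ = 0`,
so testing against it gives `0 ≤ trace (A⁻ * A) = -trace (A⁻ᴴ * A⁻)`, which forces `A⁻ = 0`.
-/

open Matrix ComplexOrder

section NonUnitalSubalgebra

variable {𝕜 A : Type*} {p : A → Prop} [RCLike 𝕜] [NonUnitalRing A] [StarRing A] [Module 𝕜 A]
  [IsScalarTower 𝕜 A A] [SMulCommClass 𝕜 A A] [StarModule 𝕜 A] [TopologicalSpace A]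
  [IsTopologicalRing A] [ContinuousConstSMul 𝕜 A] [ContinuousStar A]
  [NonUnitalContinuousFunctionalCalculus 𝕜 A p]

theorem NonUnitalSubalgebra.cfcₙ_mem {S : NonUnitalSubalgebra 𝕜 A} (hS : IsClosed (S : Set A))
    {a : A} (ha : a ∈ S) (ha' : IsSelfAdjoint a) (f : 𝕜 → 𝕜) : cfcₙ f a ∈ S := by
  have hadjoin : (NonUnitalStarAlgebra.adjoin 𝕜 {a} : Set A) ⊆ S := by
    change (NonUnitalAlgebra.adjoin 𝕜 ({a} ∪ star {a}) : Set A) ⊆ S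
    rw [Set.star_singleton, ha'.star_eq, Set.union_self]
    exact NonUnitalAlgebra.adjoin_le (Set.singleton_subset_iff.mpr ha)
  exact closure_minimal hadjoin hS (cfcₙ_mem_elemental f a)

end NonUnitalSubalgebra

open scoped MatrixOrder

section Matrix

variable {n 𝕜 : Type*} [Fintype n] [DecidableEq n] [RCLike 𝕜]

theorem Matrix.PosSemidef.trace_mul_nonneg {A B : Matrix n n 𝕜} (hA : A.PosSemidef)
    (hB : B.PosSemidef) : 0 ≤ (A * B).trace := by
  obtain ⟨C, rfl⟩ := CStarAlgebra.nonneg_iff_eq_star_mul_self.mp hA.nonneg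
  rw [star_eq_conjTranspose, Matrix.mul_assoc, trace_mul_comm]
  exact (hB.mul_mul_conjTranspose_same C).trace_nonneg

theorem Matrix.IsHermitian.trace_negPart_mul_self {A : Matrix n n 𝕜} (hA : A.IsHermitian) :
    (A⁻ * A).trace = -(A⁻ᴴ * A⁻).trace := by
  rw [(CFC.negPart_nonneg A).posSemidef.isHermitian.eq]
  nth_rw 2 [← CFC.posPart_sub_negPart A hA.isSelfAdjoint]
  rw [Matrix.mul_sub, CFC.negPart_mul_posPart, zero_sub, trace_neg]

theorem Matrix.IsHermitian.posSemidef_of_trace_negPart_mul_nonneg {A : Matrix n n 𝕜}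
    (hA : A.IsHermitian) (h : 0 ≤ (A⁻ * A).trace) : A.PosSemidef := by
  have hneg : (A⁻ᴴ * A⁻).trace = 0 :=
    le_antisymm (by simpa [hA.trace_negPart_mul_self] using h)
      (posSemidef_conjTranspose_mul_self _).trace_nonneg
  rw [trace_conjTranspose_mul_self_eq_zero_iff, CFC.negPart_eq_zero_iff A hA.isSelfAdjoint] at hneg
  exact hneg.posSemidef

theorem Submodule.negPart_mem {𝒜 : Submodule 𝕜 (Matrix n n 𝕜)}
    (hmul : ∀ X ∈ 𝒜, ∀ Y ∈ 𝒜, X * Y ∈ 𝒜) {A : Matrix n n 𝕜} (hA : A ∈ 𝒜)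
    (hHerm : A.IsHermitian) : A⁻ ∈ 𝒜 :=
  let S := (𝒜.restrictScalars ℝ).toNonUnitalSubalgebra fun X Y hX hY ↦ hmul X hX Y hY
  S.cfcₙ_mem 𝒜.closed_of_finiteDimensional hA hHerm.isSelfAdjoint _

end Matrix

theorem posSemidef_iff_trace_nonneg_of_mem_star_algebra_general {n : ℕ}
    (𝒜 : Submodule ℂ (Matrix (Fin n) (Fin n) ℂ))
    (hmul : ∀ X ∈ 𝒜, ∀ Y ∈ 𝒜, X * Y ∈ 𝒜)
    (A : Matrix (Fin n) (Fin n) ℂ) (hA : A ∈ 𝒜) (hHerm : A.IsHermitian) :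
    A.PosSemidef ↔ ∀ B ∈ 𝒜, B.PosSemidef → 0 ≤ (Bᴴ * A).trace := by
  refine ⟨fun hPSD B _ hB ↦ ?_, fun h ↦ ?_⟩
  · rw [hB.isHermitian.eq]
    exact hB.trace_mul_nonneg hPSD
  · have hnegPSD : A⁻.PosSemidef := (CFC.negPart_nonneg A).posSemidef
    have htest := h _ (𝒜.negPart_mem hmul hA hHerm) hnegPSD
    rw [hnegPSD.isHermitian.eq] at htest
    exact hHerm.posSemidef_of_trace_negPart_mul_nonneg htest

/-- In a matrix *-algebra `𝒜`, a Hermitian element `A ∈ 𝒜` is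
positive semidefinite if and only if `⟨A, B⟩ = trace (Bᴴ * A) ≥ 0` for every
positive semidefinite `B ∈ 𝒜` (self-duality of the PSD cone in `𝒜`). -/
theorem posSemidef_iff_trace_nonneg_of_mem_star_algebra {n : ℕ}
    (𝒜 : Submodule ℂ (Matrix (Fin n) (Fin n) ℂ))
    (hmul : ∀ X ∈ 𝒜, ∀ Y ∈ 𝒜, X * Y ∈ 𝒜)
    (hstar : ∀ X ∈ 𝒜, Xᴴ ∈ 𝒜)
    (A : Matrix (Fin n) (Fin n) ℂ) (hA : A ∈ 𝒜) (hHerm : A.IsHermitian) :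
    A.PosSemidef ↔ ∀ B ∈ 𝒜, B.PosSemidef → 0 ≤ (Bᴴ * A).trace :=
  posSemidef_iff_trace_nonneg_of_mem_star_algebra_general 𝒜 hmul A hA hHerm
end

section
/- Let 𝒜 ⊆ ℂ^{n×n} be a matrix *-algebra and let π_𝒜 : ℂ^{n×n} → 𝒜 be the orthogonal projection onto 𝒜 with respect to the trace inner product ⟨X, Y⟩ = trace(Y*X). If X ∈ ℂ^{n×n} is positive semidefinite, then π_𝒜(X) is positive semidefinite. -/
/-!
Since `𝒜` is closed under `ᴴ`, the projection commutes with `ᴴ`, so `A := π_𝒜(X)` is Hermitian.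
Its negative part `A⁻` lies in `𝒜`, which is a finite-dimensional, hence closed, non-unital
*-subalgebra stable under the continuous functional calculus. As `A⁻` is Hermitian, orthogonality
gives `tr(A⁻ A) = tr(A⁻ X) ≥ 0`. But `A⁻ A = -(A⁻)²`, so `tr((A⁻)ᴴ A⁻) ≤ 0`, forcing `A⁻ = 0`.
-/

open Matrix ComplexOrder

open scoped MatrixOrder

namespace Matrix

variable {𝕜 n : Type*} [RCLike 𝕜] [Fintype n]

lemma PosSemidef.trace_mul_nonneg_s4 {A B : Matrix n n 𝕜} (hA : A.PosSemidef) (hB : B.PosSemidef) :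
    0 ≤ (A * B).trace := by
  classical
  obtain ⟨S, rfl⟩ := CStarAlgebra.nonneg_iff_eq_star_mul_self.mp hA.nonneg
  rw [star_eq_conjTranspose, Matrix.mul_assoc, trace_mul_comm]
  simpa [Matrix.mul_assoc] using (hB.mul_mul_conjTranspose_same S).trace_nonneg

section OrthogonalProjection

variable {𝒜 : Submodule 𝕜 (Matrix n n 𝕜)} {p : Matrix n n 𝕜 → Matrix n n 𝕜}

lemma eq_apply_of_mem_of_orthogonal (hrange : ∀ X, p X ∈ 𝒜)
    (horth : ∀ X, ∀ B ∈ 𝒜, (Bᴴ * (X - p X)).trace = 0) {X B : Matrix n n 𝕜} (hB : B ∈ 𝒜)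
    (hXB : ∀ C ∈ 𝒜, (Cᴴ * (X - B)).trace = 0) : B = p X := by
  have hD : p X - B ∈ 𝒜 := 𝒜.sub_mem (hrange X) hB
  have : (p X - B)ᴴ * (p X - B) = (p X - B)ᴴ * (X - B) - (p X - B)ᴴ * (X - p X) := by
    rw [← Matrix.mul_sub, sub_sub_sub_cancel_left]
  rw [eq_comm, ← sub_eq_zero, ← trace_conjTranspose_mul_self_eq_zero_iff, this, trace_sub,
    hXB _ hD, horth _ _ hD, sub_zero]

lemma isHermitian_apply_of_orthogonal (hstar : ∀ X ∈ 𝒜, Xᴴ ∈ 𝒜) (hrange : ∀ X, p X ∈ 𝒜)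
    (horth : ∀ X, ∀ B ∈ 𝒜, (Bᴴ * (X - p X)).trace = 0) {X : Matrix n n 𝕜} (hX : X.IsHermitian) :
    (p X).IsHermitian := by
  refine eq_apply_of_mem_of_orthogonal hrange horth (hstar _ (hrange X)) fun C hC => ?_
  calc (Cᴴ * (X - (p X)ᴴ)).trace = (Cᴴ * (X - p X)ᴴ).trace := by
        rw [conjTranspose_sub, hX.eq]
    _ = star (Cᴴᴴ * (X - p X)).trace := by
        rw [← trace_conjTranspose, conjTranspose_mul, conjTranspose_conjTranspose, trace_mul_comm]
    _ = 0 := by rw [horth X _ (hstar C hC), star_zero]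

end OrthogonalProjection

variable [DecidableEq n]

lemma cfcₙ_mem_of_mul_mem_of_star_mem (𝒜 : Submodule 𝕜 (Matrix n n 𝕜))
    (hmul : ∀ X ∈ 𝒜, ∀ Y ∈ 𝒜, X * Y ∈ 𝒜) (hstar : ∀ X ∈ 𝒜, Xᴴ ∈ 𝒜) (f : ℝ → ℝ)
    {A : Matrix n n 𝕜} (hA : A ∈ 𝒜) : cfcₙ f A ∈ 𝒜 := by
  let S : NonUnitalStarSubalgebra 𝕜 (Matrix n n 𝕜) :=
    (𝒜.toNonUnitalSubalgebra fun X Y hX hY => hmul X hX Y hY).toNonUnitalStarSubalgebra hstar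
  have : IsClosed (S : Set (Matrix n n 𝕜)) := 𝒜.closed_of_finiteDimensional
  exact cfcₙ_mem (s := S) f hA

lemma IsHermitian.posSemidef_of_trace_negPart_mul_nonneg_s4 {A : Matrix n n 𝕜} (hA : A.IsHermitian)
    (h : 0 ≤ (A⁻ * A).trace) : A.PosSemidef := by
  have hNA : A⁻ * A = -(A⁻ᴴ * A⁻) := by
    nth_rw 2 [← CFC.posPart_sub_negPart A]
    rw [Matrix.mul_sub, CFC.negPart_mul_posPart, zero_sub,
      (CFC.negPart_nonneg A).posSemidef.isHermitian.eq]
  have hN : (A⁻ᴴ * A⁻).trace = 0 := by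
    rw [hNA, trace_neg, neg_nonneg] at h
    exact le_antisymm h (posSemidef_conjTranspose_mul_self _).trace_nonneg
  rw [trace_conjTranspose_mul_self_eq_zero_iff, CFC.negPart_eq_zero_iff A] at hN
  exact hN.posSemidef

end Matrix

theorem orthogonal_projection_onto_star_algebra_posSemidef_general {n : ℕ}
    (𝒜 : Submodule ℂ (Matrix (Fin n) (Fin n) ℂ))
    (hmul : ∀ X ∈ 𝒜, ∀ Y ∈ 𝒜, X * Y ∈ 𝒜)
    (hstar : ∀ X ∈ 𝒜, Xᴴ ∈ 𝒜)
    (p : Matrix (Fin n) (Fin n) ℂ →ₗ[ℂ] Matrix (Fin n) (Fin n) ℂ)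
    (hrange : ∀ X : Matrix (Fin n) (Fin n) ℂ, p X ∈ 𝒜)
    (horth : ∀ X : Matrix (Fin n) (Fin n) ℂ, ∀ B ∈ 𝒜, (Bᴴ * (X - p X)).trace = 0)
    (X : Matrix (Fin n) (Fin n) ℂ) (hX : X.PosSemidef) :
    (p X).PosSemidef := by
  have hA : (p X).IsHermitian := isHermitian_apply_of_orthogonal hstar hrange horth hX.isHermitian
  have hN : (p X)⁻ ∈ 𝒜 := cfcₙ_mem_of_mul_mem_of_star_mem 𝒜 hmul hstar _ (hrange X)
  refine hA.posSemidef_of_trace_negPart_mul_nonneg_s4 ?_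
  -- `(p X)⁻` is Hermitian and lies in `𝒜`, so it cannot tell `p X` from `X`.
  have hNH : (p X)⁻ᴴ = (p X)⁻ := (CFC.negPart_nonneg _).isSelfAdjoint
  have htrace := horth X _ hN
  rw [hNH, Matrix.mul_sub, trace_sub, sub_eq_zero] at htrace
  exact htrace ▸ ((CFC.negPart_nonneg _).posSemidef.trace_mul_nonneg_s4 hX)

/-- The orthogonal projection (with respect to the trace inner
product `⟨X, Y⟩ = trace (Yᴴ * X)`) of `ℂ^{n×n}` onto a matrix *-algebra `𝒜`
maps positive semidefinite matrices to positive semidefinite matrices. -/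
theorem orthogonal_projection_onto_star_algebra_posSemidef {n : ℕ}
    (𝒜 : Submodule ℂ (Matrix (Fin n) (Fin n) ℂ))
    (hmul : ∀ X ∈ 𝒜, ∀ Y ∈ 𝒜, X * Y ∈ 𝒜)
    (hstar : ∀ X ∈ 𝒜, Xᴴ ∈ 𝒜)
    (p : Matrix (Fin n) (Fin n) ℂ →ₗ[ℂ] Matrix (Fin n) (Fin n) ℂ)
    (hrange : ∀ X : Matrix (Fin n) (Fin n) ℂ, p X ∈ 𝒜)
    (hid : ∀ X ∈ 𝒜, p X = X)
    (horth : ∀ X : Matrix (Fin n) (Fin n) ℂ, ∀ B ∈ 𝒜, (Bᴴ * (X - p X)).trace = 0)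
    (X : Matrix (Fin n) (Fin n) ℂ) (hX : X.PosSemidef) :
    (p X).PosSemidef :=
  orthogonal_projection_onto_star_algebra_posSemidef_general 𝒜 hmul hstar p hrange horth X hX
end

section
/- Let V be a finite set and let y : 𝒫(V) → ℝ be a function on the power set of V with y(∅) = 1. Let M(y) be the 𝒫(V)×𝒫(V) matrix with entries M(y)_{S,T} = y(S ∪ T). If M(y) is positive semidefinite, then y is a convex combination of 0/1 liftings: there exist nonnegative weights λ_x, x ∈ {0,1}^V, summing to 1, such that y(S) = Σ_{x∈{0,1}^V} λ_x · Π_{v∈S} x_v for every S ⊆ V. Consequently M(y) is a convex combination of the rank-one moment matrices M(ŷ_x) where ŷ_x(S) = Π_{v∈S} x_v. -/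
/-!
Let `z = μ y` be the Möbius transform of `y` on the Boolean lattice, so that
`y S = ∑_{X ⊇ S} z X` and hence `M(y) = ζ · diag z · ζᵀ`, where `ζ` is the zeta matrix
`ζ S X = [S ⊆ X]`. As `μ ζ = 1`, the congruence `μ M(y) μᵀ = diag z` is positive semidefinite,
so `z ≥ 0`. The weight of `x ∈ {0,1}^V` is `z {v | x v}`, and `y ∅ = 1` makes the weights sum
to `1`.
-/

open Finset Matrix IncidenceAlgebra

namespace IncidenceAlgebra

variable {𝕜 α : Type*} [Preorder α]

def toMatrix [Zero 𝕜] (f : IncidenceAlgebra 𝕜 α) : Matrix α α 𝕜 := Matrix.of fun a b => f a b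

lemma toMatrix_mul [Fintype α] [LocallyFiniteOrder α] [NonUnitalNonAssocSemiring 𝕜]
    (f g : IncidenceAlgebra 𝕜 α) : toMatrix (f * g) = toMatrix f * toMatrix g := by
  ext a b
  refine sum_subset (subset_univ _) fun x _ hx => ?_
  rw [mem_Icc, not_and_or] at hx
  rcases hx with hax | hxb
  · rw [apply_eq_zero_of_not_le hax, zero_mul]
  · rw [apply_eq_zero_of_not_le hxb, mul_zero]

lemma toMatrix_one [DecidableEq α] [Zero 𝕜] [One 𝕜] :
    toMatrix (1 : IncidenceAlgebra 𝕜 α) = 1 := by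
  ext a b
  simp [toMatrix, Matrix.one_apply]

end IncidenceAlgebra

section Moebius

variable {𝕜 α : Type*} [Fintype α] [PartialOrder α] [LocallyFiniteOrder α] [DecidableEq α]
  [Ring 𝕜]

def moebiusTransform (y : α → 𝕜) : α → 𝕜 := toMatrix (mu 𝕜) *ᵥ y

variable [DecidableLE α]

lemma toMatrix_mu_mul_toMatrix_zeta :
    toMatrix (mu 𝕜) * toMatrix (zeta 𝕜) = (1 : Matrix α α 𝕜) := by
  rw [← toMatrix_mul, mu_mul_zeta, toMatrix_one]

lemma toMatrix_zeta_mulVec_moebiusTransform (y : α → 𝕜) :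
    toMatrix (zeta 𝕜) *ᵥ moebiusTransform y = y := by
  rw [moebiusTransform, mulVec_mulVec, ← toMatrix_mul, zeta_mul_mu, toMatrix_one, one_mulVec]

end Moebius

section MomentMatrix

variable {𝕜 α : Type*} [SemilatticeSup α]

def momentMatrix (y : α → 𝕜) : Matrix α α 𝕜 := of fun a b => y (a ⊔ b)

variable [Fintype α] [LocallyFiniteOrder α] [DecidableEq α] [DecidableLE α]

lemma momentMatrix_eq_toMatrix_zeta_mul_diagonal_mul_transpose [Ring 𝕜] (y : α → 𝕜) :
    momentMatrix y =
      toMatrix (zeta 𝕜) * diagonal (moebiusTransform y) * (toMatrix (zeta 𝕜))ᵀ := by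
  ext a b
  conv_lhs => rw [momentMatrix, of_apply, ← toMatrix_zeta_mulVec_moebiusTransform y]
  rw [Matrix.mul_apply]
  simp only [mulVec, dotProduct, toMatrix, zeta_apply, of_apply, sup_le_iff, ite_and, ite_mul,
    one_mul, zero_mul, mul_diagonal, transpose_apply, mul_ite, mul_one, mul_zero]
  exact sum_congr rfl fun c _ => by split_ifs <;> rfl

lemma moebiusTransform_nonneg {y : α → ℝ} (hy : (momentMatrix y).PosSemidef) (a : α) :
    0 ≤ moebiusTransform y a := by
  have hD : (diagonal (moebiusTransform y)).PosSemidef := by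
    have := hy.mul_mul_conjTranspose_same (toMatrix (mu ℝ))
    rwa [momentMatrix_eq_toMatrix_zeta_mul_diagonal_mul_transpose,
      conjTranspose_eq_transpose_of_trivial, ← Matrix.mul_assoc, ← Matrix.mul_assoc,
      toMatrix_mu_mul_toMatrix_zeta, Matrix.one_mul, Matrix.mul_assoc, ← transpose_mul,
      toMatrix_mu_mul_toMatrix_zeta, transpose_one, Matrix.mul_one] at this
  exact posSemidef_diagonal_iff.1 hD a

end MomentMatrix

section Boolean

variable {V : Type*} [Fintype V] [DecidableEq V]

def boolFunEquivFinset : (V → Bool) ≃ Finset V where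
  toFun x := univ.filter (x ·)
  invFun s v := decide (v ∈ s)
  left_inv x := by ext; simp
  right_inv s := by ext; simp

lemma prod_ite_eq_zeta_boolFunEquivFinset (x : V → Bool) (S : Finset V) :
    ∏ v ∈ S, (if x v then (1 : ℝ) else 0) = zeta ℝ S (boolFunEquivFinset x) := by
  simp [prod_boole, zeta_apply, boolFunEquivFinset, subset_iff]

lemma eq_sum_moebiusTransform_mul_prod_ite (y : Finset V → ℝ) (S : Finset V) :
    y S = ∑ x, moebiusTransform y (boolFunEquivFinset x) *
      ∏ v ∈ S, (if x v then (1 : ℝ) else 0) := by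
  simp_rw [prod_ite_eq_zeta_boolFunEquivFinset]
  rw [boolFunEquivFinset.sum_comp fun X => moebiusTransform y X * zeta ℝ S X]
  conv_lhs => rw [← toMatrix_zeta_mulVec_moebiusTransform y]
  simp [mulVec, dotProduct, toMatrix, mul_comm]

end Boolean

/-- A combinatorial moment matrix `M(y)` with `y ∅ = 1` which is
positive semidefinite is a convex combination of the moment matrices of 0/1
liftings: there are nonnegative weights `lam x`, `x ∈ {0,1}^V`, summing to `1`,
with `y S = ∑ x, lam x * ∏_{v ∈ S} x v`, and consequently
`M(y) = ∑ x, lam x • M(ŷ_x)`. -/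
theorem moment_matrix_convex_combination_of_liftings {V : Type*} [Fintype V] [DecidableEq V]
    (y : Finset V → ℝ) (hy : y ∅ = 1)
    (hpsd : (Matrix.of fun S T : Finset V => y (S ∪ T)).PosSemidef) :
    ∃ lam : (V → Bool) → ℝ,
      (∀ x, 0 ≤ lam x) ∧
      (∑ x : V → Bool, lam x = 1) ∧
      (∀ S : Finset V,
        y S = ∑ x : V → Bool, lam x * ∏ v ∈ S, (if x v then (1 : ℝ) else 0)) ∧
      ((Matrix.of fun S T : Finset V => y (S ∪ T)) =
        ∑ x : V → Bool, lam x •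
          Matrix.of (fun S T : Finset V =>
            ∏ v ∈ S ∪ T, (if x v then (1 : ℝ) else 0))) := by
  have hlift := eq_sum_moebiusTransform_mul_prod_ite y
  refine ⟨fun x => moebiusTransform y (boolFunEquivFinset x),
    fun x => moebiusTransform_nonneg hpsd _, ?_, hlift, ?_⟩
  · simpa [hy] using (hlift ∅).symm
  · ext S T
    simp [Matrix.sum_apply, hlift (S ∪ T)]
end

section
/- (Lovász sandwich theorem) Let Γ = (V, E) be a finite simple graph on n vertices and define the theta number ϑ(Γ) = max{ ⟨X, J⟩ : X ∈ ℝ^{n×n} symmetric positive semidefinite, trace(X) = 1, X_{ij} = 0 for all edges {i,j} ∈ E }, where J is the all-one matrix and ⟨X, J⟩ = Σ_{i,j} X_{ij}. Then α(Γ) ≤ ϑ(Γ) ≤ χ(Γ̄), where α(Γ) is the independence number of Γ and χ(Γ̄) is the chromatic number of the complement graph Γ̄. -/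
/-!
For an independent set `s`, the matrix `(1/|s|) 𝟙ₛ 𝟙ₛᵀ` is feasible with value `|s|`, giving
`α(Γ) ≤ ϑ(Γ)`. For a proper colouring of `Γ̄` with `c` colours, the colour classes are cliques
of `Γ`, so with `eₖ` their indicator vectors a feasible `X` has `∑ₖ eₖᵀ X eₖ = tr X = 1`; the
Cauchy–Schwarz inequality for the positive semidefinite form `X` then gives
`𝟙ᵀ X 𝟙 = (∑ₖ eₖ)ᵀ X (∑ₖ eₖ) ≤ c ∑ₖ eₖᵀ X eₖ = c`.
-/

open Matrix

namespace Matrix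

variable {V ι : Type*} [Fintype V] [Fintype ι]

lemma sum_entries_eq_one_dotProduct_mulVec_one (X : Matrix V V ℝ) :
    ∑ i, ∑ j, X i j = 1 ⬝ᵥ X *ᵥ 1 := by
  simp [dotProduct, mulVec]

lemma PosSemidef.dotProduct_mulVec_self_nonneg {X : Matrix V V ℝ} (hX : X.PosSemidef)
    (w : V → ℝ) : 0 ≤ w ⬝ᵥ X *ᵥ w := by
  simpa using hX.dotProduct_mulVec_nonneg w

lemma PosSemidef.sum_entries_nonneg {X : Matrix V V ℝ} (hX : X.PosSemidef) :
    0 ≤ ∑ i, ∑ j, X i j := by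
  rw [sum_entries_eq_one_dotProduct_mulVec_one]
  exact hX.dotProduct_mulVec_self_nonneg 1

lemma PosSemidef.dotProduct_mulVec_sum_le {X : Matrix V V ℝ} (hX : X.PosSemidef)
    (e : ι → V → ℝ) :
    (∑ k, e k) ⬝ᵥ X *ᵥ (∑ k, e k) ≤ Fintype.card ι * ∑ k, e k ⬝ᵥ X *ᵥ e k := by
  set m : ℝ := (Fintype.card ι : ℝ)
  set s := ∑ k, e k
  rcases isEmpty_or_nonempty ι with _ | _
  · simp [s]
  have hm : 0 < m := Nat.cast_pos.mpr Fintype.card_pos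
  -- `0 ≤ ∑ₖ Q(m eₖ - s) = m (m ∑ₖ Q(eₖ) - Q(s))`
  have hexpand (k : ι) : (m • e k - s) ⬝ᵥ X *ᵥ (m • e k - s)
      = m ^ 2 * (e k ⬝ᵥ X *ᵥ e k) - m * (e k ⬝ᵥ X *ᵥ s) - m * (s ⬝ᵥ X *ᵥ e k)
        + s ⬝ᵥ X *ᵥ s := by
    simp only [mulVec_sub, mulVec_smul, sub_dotProduct, dotProduct_sub, smul_dotProduct,
      dotProduct_smul, smul_eq_mul]
    ring
  have hleft : ∑ k, e k ⬝ᵥ X *ᵥ s = s ⬝ᵥ X *ᵥ s := (sum_dotProduct _ _ _).symm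
  have hright : ∑ k, s ⬝ᵥ X *ᵥ e k = s ⬝ᵥ X *ᵥ s := by
    rw [← dotProduct_sum, ← mulVec_sum]
  have hnonneg : 0 ≤ ∑ k, (m • e k - s) ⬝ᵥ X *ᵥ (m • e k - s) :=
    Finset.sum_nonneg fun k _ => hX.dotProduct_mulVec_self_nonneg _
  simp only [hexpand, Finset.sum_add_distrib, Finset.sum_sub_distrib, ← Finset.mul_sum, hleft,
    hright, Finset.sum_const, Finset.card_univ, nsmul_eq_mul] at hnonneg
  nlinarith

end Matrix

namespace SimpleGraph

variable {V α : Type*} {Γ : SimpleGraph V}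

lemma Coloring.adj_of_ne_of_color_eq (C : Γᶜ.Coloring α) {i j : V} (hij : i ≠ j)
    (hC : C i = C j) : Γ.Adj i j := by
  by_contra hadj
  exact C.valid ((compl_adj Γ i j).mpr ⟨hij, hadj⟩) hC

variable [Fintype V] [Fintype α] [DecidableEq α]

/-- The colour classes of a colouring of `Γᶜ` are cliques of `Γ`, on which `X` is diagonal. -/
lemma Coloring.sum_dotProduct_mulVec_indicator_eq_trace (C : Γᶜ.Coloring α)
    {X : Matrix V V ℝ} (hX : ∀ i j, Γ.Adj i j → X i j = 0) :
    ∑ k, (fun i => if C i = k then (1 : ℝ) else 0) ⬝ᵥ X *ᵥ (fun i => if C i = k then 1 else 0)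
      = X.trace := by
  classical
  have hentry (i j : V) :
      ∑ k, (if C i = k then (1 : ℝ) else 0) * (X i j * if C j = k then 1 else 0)
        = if i = j then X i j else 0 := by
    simp only [ite_mul, one_mul, zero_mul, mul_ite, mul_one, mul_zero, Finset.sum_ite_eq,
      Finset.mem_univ, if_true]
    by_cases hij : i = j
    · simp [hij]
    · by_cases hC : C j = C i
      · simp [hij, hC, hX i j (C.adj_of_ne_of_color_eq hij hC.symm)]
      · simp [hij, Ne.symm hC]
  simp only [dotProduct, mulVec, Finset.mul_sum]
  rw [Finset.sum_comm]
  simp_rw [Finset.sum_comm (γ := α), hentry]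
  simp [Matrix.trace]

lemma IsIndepSet.exists_posSemidef_trace_eq_one_sum_entries_eq_card {s : Finset V}
    (hs : Γ.IsIndepSet s) (hne : s.Nonempty) :
    ∃ X : Matrix V V ℝ, X.PosSemidef ∧ X.trace = 1 ∧ (∀ i j, Γ.Adj i j → X i j = 0) ∧
      (s.card : ℝ) = ∑ i, ∑ j, X i j := by
  classical
  set v : V → ℝ := fun i => if i ∈ s then 1 else 0
  have hcard : (0 : ℝ) < s.card := Nat.cast_pos.mpr hne.card_pos
  have hsum : ∑ i, v i = s.card := by simp [v]
  refine ⟨(s.card : ℝ)⁻¹ • vecMulVec v v, ?_, ?_, ?_, ?_⟩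
  · simpa using (posSemidef_vecMulVec_self_star v).smul (inv_nonneg.mpr hcard.le)
  · have hvv : v ⬝ᵥ v = s.card := by simp [dotProduct, v]
    rw [trace_smul, trace_vecMulVec, hvv, smul_eq_mul, inv_mul_cancel₀ hcard.ne']
  · intro i j hij
    by_cases hi : i ∈ s
    · by_cases hj : j ∈ s
      · exact absurd hij (hs hi hj hij.ne)
      · simp [vecMulVec_apply, v, hj]
    · simp [vecMulVec_apply, v, hi]
  · simp only [Matrix.smul_apply, vecMulVec_apply, smul_eq_mul, ← Finset.mul_sum, ← Finset.sum_mul,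
      hsum]
    field_simp

end SimpleGraph

/-- Lovász sandwich theorem: if `a` is the independence number
of `Γ`, `θ` is the optimal value of the semidefinite program defining the
Lovász theta number of `Γ`, and `c` is the chromatic number of the complement
of `Γ`, then `a ≤ θ ≤ c`. -/
theorem lovasz_sandwich {n : ℕ} (Γ : SimpleGraph (Fin n))
    (a c : ℕ) (θ : ℝ)
    (ha : IsGreatest
      {k : ℕ | ∃ s : Finset (Fin n), (∀ u ∈ s, ∀ v ∈ s, ¬ Γ.Adj u v) ∧ s.card = k} a)
    (hθ : IsGreatest
      {r : ℝ | ∃ X : Matrix (Fin n) (Fin n) ℝ, X.PosSemidef ∧ X.trace = 1 ∧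
        (∀ i j, Γ.Adj i j → X i j = 0) ∧ r = ∑ i, ∑ j, X i j} θ)
    (hc : Γᶜ.chromaticNumber = (c : ℕ∞)) :
    (a : ℝ) ≤ θ ∧ θ ≤ (c : ℝ) := by
  obtain ⟨X, hXpsd, hXtr, hXedge, rfl⟩ := hθ.1
  constructor
  · obtain ⟨s, hs, rfl⟩ := ha.1
    rcases s.eq_empty_or_nonempty with rfl | hne
    · simpa using hXpsd.sum_entries_nonneg
    · exact hθ.2 (SimpleGraph.IsIndepSet.exists_posSemidef_trace_eq_one_sum_entries_eq_card
        (fun u hu v hv _ => hs u hu v hv) hne)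
  · obtain ⟨C⟩ := SimpleGraph.chromaticNumber_le_iff_colorable.mp hc.le
    have hones : ∑ k, (fun i => if C i = k then (1 : ℝ) else 0) = 1 := by
      ext i; simp
    calc ∑ i, ∑ j, X i j = 1 ⬝ᵥ X *ᵥ 1 := sum_entries_eq_one_dotProduct_mulVec_one X
      _ ≤ Fintype.card (Fin c) * X.trace := by
        rw [← hones, ← C.sum_dotProduct_mulVec_indicator_eq_trace hXedge]
        exact hXpsd.dotProduct_mulVec_sum_le _
      _ = c := by simp [hXtr]
end

section
/- Let Γ = (V, E) be a finite simple graph on n vertices. Define ϑ'(Γ) = max{ ⟨X, J⟩ : X ∈ ℝ^{n×n} symmetric positive semidefinite, X entrywise nonnegative, trace(X) = 1, X_{ij} = 0 for all edges {i,j} ∈ E } and ϑ(Γ) = max{ ⟨X, J⟩ : X ∈ ℝ^{n×n} symmetric positive semidefinite, trace(X) = 1, X_{ij} = 0 for all edges {i,j} ∈ E }. Then α(Γ) ≤ ϑ'(Γ) ≤ ϑ(Γ), where α(Γ) is the independence number of Γ. -/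
/-!
The normalized indicator matrix `|S|⁻¹ 𝟙_S 𝟙_Sᵀ` of an independent set `S` is positive
semidefinite, entrywise nonnegative, of trace one and vanishes on edges; its entries sum to
`|S|`. Taking `S` of maximum size gives `α ≤ ϑ'`. The program defining `ϑ'` only adds the
constraint `X ≥ 0` to that defining `ϑ`, so `ϑ' ≤ ϑ`.
-/

open Matrix Finset

namespace Finset

variable {V : Type*} [DecidableEq V]

noncomputable def indicatorOuterMatrix (s : Finset V) : Matrix V V ℝ :=
  (#s : ℝ)⁻¹ • vecMulVec (fun i => if i ∈ s then 1 else 0) (fun j => if j ∈ s then 1 else 0)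

variable (s : Finset V)

theorem indicatorOuterMatrix_apply (i j : V) :
    s.indicatorOuterMatrix i j = if i ∈ s ∧ j ∈ s then (#s : ℝ)⁻¹ else 0 := by
  by_cases hi : i ∈ s <;> by_cases hj : j ∈ s <;>
    simp [indicatorOuterMatrix, vecMulVec_apply, hi, hj]

theorem posSemidef_indicatorOuterMatrix [Finite V] : s.indicatorOuterMatrix.PosSemidef :=
  (posSemidef_vecMulVec_self_star _).smul (by positivity)

theorem indicatorOuterMatrix_nonneg (i j : V) : 0 ≤ s.indicatorOuterMatrix i j := by
  rw [indicatorOuterMatrix_apply]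
  split_ifs <;> positivity

theorem trace_indicatorOuterMatrix [Fintype V] (hs : s.Nonempty) :
    s.indicatorOuterMatrix.trace = 1 := by
  have hcard : (#s : ℝ) ≠ 0 := by exact_mod_cast hs.card_ne_zero
  simp only [trace, diag_apply, indicatorOuterMatrix_apply, and_self, Fintype.sum_ite_mem,
    sum_const, nsmul_eq_mul]
  exact mul_inv_cancel₀ hcard

theorem sum_indicatorOuterMatrix [Fintype V] : ∑ i, ∑ j, s.indicatorOuterMatrix i j = #s := by
  rcases s.eq_empty_or_nonempty with rfl | hs
  · simp [indicatorOuterMatrix_apply]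
  have hcard : (#s : ℝ) ≠ 0 := by exact_mod_cast hs.card_ne_zero
  simp only [indicatorOuterMatrix_apply, ite_and, sum_ite_irrel, sum_ite_mem, univ_inter,
    sum_const, nsmul_eq_mul, mul_zero]
  field_simp

theorem indicatorOuterMatrix_eq_zero_of_adj {G : SimpleGraph V} (hs : G.IsIndepSet s)
    {i j : V} (hij : G.Adj i j) : s.indicatorOuterMatrix i j = 0 := by
  rw [indicatorOuterMatrix_apply, if_neg]
  rintro ⟨hi, hj⟩
  exact hs hi hj hij.ne hij

end Finset

/-- `α(Γ) ≤ ϑ'(Γ) ≤ ϑ(Γ)`, where `ϑ'` is the variant of the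
Lovász theta number with an additional entrywise nonnegativity constraint. -/
theorem alpha_le_theta_prime_le_theta {n : ℕ} (Γ : SimpleGraph (Fin n))
    (a : ℕ) (θ' θ : ℝ)
    (ha : IsGreatest
      {k : ℕ | ∃ s : Finset (Fin n), (∀ u ∈ s, ∀ v ∈ s, ¬ Γ.Adj u v) ∧ s.card = k} a)
    (hθ' : IsGreatest
      {r : ℝ | ∃ X : Matrix (Fin n) (Fin n) ℝ, X.PosSemidef ∧ (∀ i j, 0 ≤ X i j) ∧
        X.trace = 1 ∧ (∀ i j, Γ.Adj i j → X i j = 0) ∧ r = ∑ i, ∑ j, X i j} θ')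
    (hθ : IsGreatest
      {r : ℝ | ∃ X : Matrix (Fin n) (Fin n) ℝ, X.PosSemidef ∧
        X.trace = 1 ∧ (∀ i j, Γ.Adj i j → X i j = 0) ∧ r = ∑ i, ∑ j, X i j} θ) :
    (a : ℝ) ≤ θ' ∧ θ' ≤ θ := by
  obtain ⟨X, hpsd, hnonneg, htrace, hedge, rfl⟩ := hθ'.1
  refine ⟨?_, hθ.2 ⟨X, hpsd, htrace, hedge, rfl⟩⟩
  obtain ⟨s, hind, rfl⟩ := ha.1
  have hs : Γ.IsIndepSet s := fun u hu v hv _ => hind u hu v hv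
  rcases s.eq_empty_or_nonempty with rfl | hne
  · simpa using sum_nonneg fun i _ => sum_nonneg fun j _ => hnonneg i j
  · exact hθ'.2 ⟨s.indicatorOuterMatrix, s.posSemidef_indicatorOuterMatrix,
      s.indicatorOuterMatrix_nonneg, s.trace_indicatorOuterMatrix hne,
      fun i j => s.indicatorOuterMatrix_eq_zero_of_adj hs,
      s.sum_indicatorOuterMatrix.symm⟩
end

section
/- Let G be a compact topological group acting continuously on a compact topological space M, and let μ be a G-invariant regular Borel probability measure on M. Suppose the action is generously transitive: for all x, y ∈ M there exists g ∈ G with gx = y and gy = x. Then for any two continuous G-invariant functions F, F' : M × M → ℂ (i.e. F(gx, gy) = F(x, y) and F'(gx, gy) = F'(x, y) for all g ∈ G, x, y ∈ M), the convolutions commute: ∫_M F(x, z) F'(z, y) dμ(z) = ∫_M F'(x, z) F(z, y) dμ(z) for all x, y ∈ M. -/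
open MeasureTheory

/-!
Generous transitivity makes every `G`-invariant kernel symmetric: if `g` swaps `a` and `b`, then
`F a b = F (g • b) (g • a) = F b a`. Substituting `z ↦ g • z` with `g` swapping `x` and `y` turns
`(F ∗ F')(x, y)` into `(F ∗ F')(y, x)`, and for symmetric kernels `(F ∗ F')(y, x) = (F' ∗ F)(x, y)`.
-/

def MulAction.IsGenerouslyTransitive (G M : Type*) [SMul G M] : Prop :=
  ∀ x y : M, ∃ g : G, g • x = y ∧ g • y = x

noncomputable def kernelConv {M R : Type*} [MeasurableSpace M] [NormedRing R] [NormedSpace ℝ R]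
    (μ : Measure M) (F F' : M → M → R) (x y : M) : R :=
  ∫ z, F x z * F' z y ∂μ

theorem MulAction.IsGenerouslyTransitive.flip_eq_of_smul_invariant {G M α : Type*} [SMul G M]
    (htrans : IsGenerouslyTransitive G M) {F : M → M → α}
    (hF : ∀ (g : G) (x y : M), F (g • x) (g • y) = F x y) : flip F = F := by
  funext a b
  obtain ⟨g, hga, hgb⟩ := htrans b a
  rw [flip, ← hF g b a, hga, hgb]

section Convolution

variable {M R : Type*} [MeasurableSpace M] {μ : Measure M}

theorem kernelConv_swap_of_smul_eq {G : Type*} [Group G] [MulAction G M]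
    [MeasurableConstSMul G M] [SMulInvariantMeasure G M μ] [NormedRing R] [NormedSpace ℝ R]
    {F F' : M → M → R} (hF : ∀ (g : G) (x y : M), F (g • x) (g • y) = F x y)
    (hF' : ∀ (g : G) (x y : M), F' (g • x) (g • y) = F' x y)
    {g : G} {x y : M} (hgx : g • x = y) (hgy : g • y = x) :
    kernelConv μ F F' x y = kernelConv μ F F' y x := by
  rw [kernelConv, ← integral_smul_eq_self _ (g := g)]
  refine integral_congr_ae (Filter.Eventually.of_forall fun z => ?_)
  dsimp only
  rw [← hgy, hF, ← hgx, hF', hgx, hgy]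

theorem kernelConv_swap [NormedCommRing R] [NormedSpace ℝ R] (F F' : M → M → R) (x y : M) :
    kernelConv μ F F' y x = kernelConv μ (flip F') (flip F) x y := by
  simp only [kernelConv, flip, mul_comm]

end Convolution

theorem convolution_comm_of_generously_transitive_general
    {G M : Type*} [Group G] [TopologicalSpace G]
    [TopologicalSpace M]
    [MulAction G M] [ContinuousSMul G M]
    [MeasurableSpace M] [BorelSpace M]
    (μ : Measure M)
    [SMulInvariantMeasure G M μ]
    (htrans : ∀ x y : M, ∃ g : G, g • x = y ∧ g • y = x)
    (F F' : M → M → ℂ)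
    (hFinv : ∀ (g : G) (x y : M), F (g • x) (g • y) = F x y)
    (hF'inv : ∀ (g : G) (x y : M), F' (g • x) (g • y) = F' x y)
    (x y : M) :
    ∫ z, F x z * F' z y ∂μ = ∫ z, F' x z * F z y ∂μ := by
  obtain ⟨g, hgx, hgy⟩ := htrans x y
  have hF_symm := MulAction.IsGenerouslyTransitive.flip_eq_of_smul_invariant htrans hFinv
  have hF'_symm := MulAction.IsGenerouslyTransitive.flip_eq_of_smul_invariant htrans hF'inv
  calc ∫ z, F x z * F' z y ∂μ
      = kernelConv μ F F' y x := kernelConv_swap_of_smul_eq hFinv hF'inv hgx hgy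
    _ = kernelConv μ (flip F') (flip F) x y := kernelConv_swap F F' x y
    _ = ∫ z, F' x z * F z y ∂μ := by rw [hF_symm, hF'_symm, kernelConv]

/-- For a generously transitive continuous action of a compact
group `G` on a compact space `M` with a `G`-invariant regular Borel probability
measure `μ`, convolution of continuous `G`-invariant functions on `M × M` is
commutative. -/
theorem convolution_comm_of_generously_transitive
    {G M : Type*} [Group G] [TopologicalSpace G] [IsTopologicalGroup G] [CompactSpace G]
    [TopologicalSpace M] [CompactSpace M]
    [MulAction G M] [ContinuousSMul G M]
    [MeasurableSpace M] [BorelSpace M]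
    (μ : Measure M) [IsProbabilityMeasure μ] [μ.Regular]
    [SMulInvariantMeasure G M μ]
    (htrans : ∀ x y : M, ∃ g : G, g • x = y ∧ g • y = x)
    (F F' : M → M → ℂ)
    (hF : Continuous fun p : M × M => F p.1 p.2)
    (hF' : Continuous fun p : M × M => F' p.1 p.2)
    (hFinv : ∀ (g : G) (x y : M), F (g • x) (g • y) = F x y)
    (hF'inv : ∀ (g : G) (x y : M), F' (g • x) (g • y) = F' x y)
    (x y : M) :
    ∫ z, F x z * F' z y ∂μ = ∫ z, F' x z * F z y ∂μ :=
  convolution_comm_of_generously_transitive_general μ htrans F F' hFinv hF'inv x y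
end

section
/- Let n ≥ 2, d ≥ 0, s ∈ ℝ with −1 ≤ s < 1. For k = 0, …, d let S_k : ℝ³ → ℝ^{(d+1)×(d+1)} be matrix-valued functions, symmetric under all permutations of their three arguments corresponding to permuting a triple of points (i.e. S_k(u,v,t) = S_k(σ(u,v,t)) for every permutation σ of the three coordinates), such that: (a) for every finite set C ⊆ S^{n−1} and every k, the matrix Σ_{(x,y,z)∈C³} S_k(x·y, y·z, z·x) is symmetric positive semidefinite; (b) S_0(1,1,1) = J, the all-one matrix, and S_k(1,1,1) = 0 for k ≥ 1. Suppose F_0, …, F_d are real symmetric positive semidefinite (d+1)×(d+1) matrices satisfying: (c) Σ_{k=0}^d ⟨F_k, S_k(u,u,1)⟩ ≤ −1/3 for all u ∈ [−1, s]; (d) Σ_{k=0}^d ⟨F_k, S_k(u,v,t)⟩ ≤ 0 for all u, v, t ∈ [−1, s]. Then every finite set C ⊆ S^{n−1} with x·y ≤ s for all distinct x, y ∈ C satisfies |C| ≤ 1 + ⟨F_0, J⟩. -/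
/-!
Put `Φ(x, y, z) = ∑ₖ ⟨F k, S k (x·y) (y·z) (z·x)⟩`. Since each `F k` and each
`∑_{C³} S k (x·y) (y·z) (z·x)` is positive semidefinite, `∑_{C³} Φ ≥ 0`
(the Frobenius pairing of two such matrices is the entry sum of their Schur product).
On the other hand (b), (c), (d) bound `Φ` on each triple according to which of its points
coincide, and summing gives `∑_{C³} Φ ≤ |C| ⟨F 0, J⟩ - |C| (|C| - 1)`.
-/

open Matrix Finset

theorem Matrix.PosSemidef.sum_apply_nonneg {m : Type*} [Fintype m] {A : Matrix m m ℝ}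
    (hA : A.PosSemidef) : 0 ≤ ∑ i, ∑ j, A i j := by
  simpa [dotProduct, mulVec, mul_sum] using hA.dotProduct_mulVec_nonneg (fun _ => 1)

theorem Matrix.PosSemidef.sum_mul_apply_nonneg {m : Type*} [Fintype m] {A B : Matrix m m ℝ}
    (hA : A.PosSemidef) (hB : B.PosSemidef) : 0 ≤ ∑ i, ∑ j, A i j * B i j :=
  (hA.hadamard hB).sum_apply_nonneg

theorem sum_triples_sum_mul_apply_nonneg {α κ m : Type*} [Fintype κ] [Fintype m]
    {F : κ → Matrix m m ℝ} (hF : ∀ k, (F k).PosSemidef) (s : Finset α)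
    (G : α → α → α → κ → Matrix m m ℝ)
    (hG : ∀ k, (∑ x ∈ s, ∑ y ∈ s, ∑ z ∈ s, G x y z k).PosSemidef) :
    0 ≤ ∑ x ∈ s, ∑ y ∈ s, ∑ z ∈ s, ∑ k, ∑ i, ∑ j, F k i j * G x y z k i j := by
  let L : (κ → Matrix m m ℝ) →ₗ[ℝ] ℝ :=
    { toFun := fun H => ∑ k, ∑ i, ∑ j, F k i j * H k i j
      map_add' := fun _ _ => by simp [mul_add, sum_add_distrib]
      map_smul' := fun _ _ => by simp [mul_sum, mul_left_comm] }
  have hL : ∑ x ∈ s, ∑ y ∈ s, ∑ z ∈ s, ∑ k, ∑ i, ∑ j, F k i j * G x y z k i j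
      = L (∑ x ∈ s, ∑ y ∈ s, ∑ z ∈ s, G x y z) := by
    simp only [map_sum]
    rfl
  rw [hL]
  exact sum_nonneg fun k _ => by
    simpa only [Finset.sum_apply] using (hF k).sum_mul_apply_nonneg (hG k)

theorem neg_one_le_dotProduct {ι : Type*} [Fintype ι] {x y : ι → ℝ} (hx : x ⬝ᵥ x = 1)
    (hy : y ⬝ᵥ y = 1) : -1 ≤ x ⬝ᵥ y := by
  have := dotProduct_self_star_nonneg (x + y)
  simp only [star_trivial, add_dotProduct, dotProduct_add, hx, hy, dotProduct_comm y x] at this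
  linarith

/-- The `#C` constant triples contribute at most `A` each, the `3 #C (#C - 1)` triples with exactly
two equal entries at most `-1/3` each and the others at most `0`, so `0 ≤ #C * A - #C * (#C - 1)`.
The weight `δ` below encodes this coincidence pattern. -/
theorem card_le_of_sum_triples_nonneg {α : Type*} [DecidableEq α] {C : Finset α}
    (hC : C.Nonempty) {Φ : α → α → α → ℝ} {A : ℝ}
    (hcyc : ∀ x y z, Φ x y z = Φ y z x)
    (hdiag : ∀ x ∈ C, Φ x x x ≤ A)
    (hpair : ∀ x ∈ C, ∀ y ∈ C, x ≠ y → Φ x x y ≤ -1 / 3)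
    (hdistinct : ∀ x ∈ C, ∀ y ∈ C, ∀ z ∈ C, x ≠ y → y ≠ z → z ≠ x → Φ x y z ≤ 0)
    (hsum : 0 ≤ ∑ x ∈ C, ∑ y ∈ C, ∑ z ∈ C, Φ x y z) :
    (#C : ℝ) ≤ 1 + A := by
  let δ : α → α → ℝ := fun x y => if x = y then 1 else 0
  have hbound : ∀ x ∈ C, ∀ y ∈ C, ∀ z ∈ C,
      Φ x y z ≤ (A + 1) * (δ x y * δ y z) - (δ x y + δ y z + δ z x) / 3 := by
    intro x hx y hy z hz
    rcases eq_or_ne x y with rfl | hxy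
    · rcases eq_or_ne x z with rfl | hxz
      · simp only [δ, if_true]; linarith [hdiag x hx]
      · simp only [δ, if_true, if_neg hxz, if_neg hxz.symm]; linarith [hpair x hx z hz hxz]
    rcases eq_or_ne y z with rfl | hyz
    · simp only [δ, if_true, if_neg hxy, if_neg hxy.symm]
      linarith [hcyc x y y, hpair y hy x hx hxy.symm]
    rcases eq_or_ne z x with rfl | hzx
    · simp only [δ, if_true, if_neg hxy, if_neg hyz]
      linarith [hcyc z y z, hcyc y z z, hpair z hz y hy hyz.symm]
    simp only [δ, if_neg hxy, if_neg hyz, if_neg hzx]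
    linarith [hdistinct x hx y hy z hz hxy hyz hzx]
  have hweights : ∑ x ∈ C, ∑ y ∈ C, ∑ z ∈ C,
      ((A + 1) * (δ x y * δ y z) - (δ x y + δ y z + δ z x) / 3) = #C * (1 + A) - #C ^ 2 := by
    simp [δ, sum_add_distrib, sum_sub_distrib, ← sum_div]
    ring
  have hpos : (0 : ℝ) < #C := by exact_mod_cast hC.card_pos
  have : 0 ≤ (#C : ℝ) * (1 + A - #C) :=
    calc 0 ≤ ∑ x ∈ C, ∑ y ∈ C, ∑ z ∈ C, Φ x y z := hsum
      _ ≤ _ := sum_le_sum fun x hx => sum_le_sum fun y hy => sum_le_sum fun z hz =>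
        hbound x hx y hy z hz
      _ = _ := by rw [hweights]; ring
  linarith [(mul_nonneg_iff_of_pos_left hpos).mp this]

theorem sdp_bound_spherical_codes_general {n d : ℕ} (s : ℝ)
    (S : Fin (d + 1) → ℝ → ℝ → ℝ → Matrix (Fin (d + 1)) (Fin (d + 1)) ℝ)
    (hsym : ∀ (k : Fin (d + 1)) (u v t : ℝ),
      S k u v t = S k v t u ∧ S k u v t = S k u t v)
    (hpsd3 : ∀ (C : Finset (Fin n → ℝ)), (∀ x ∈ C, ∑ i, x i * x i = 1) →
      ∀ k : Fin (d + 1),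
        (∑ x ∈ C, ∑ y ∈ C, ∑ z ∈ C,
          S k (∑ i, x i * y i) (∑ i, y i * z i) (∑ i, z i * x i)).PosSemidef)
    (hS0 : S 0 1 1 1 = Matrix.of fun _ _ => (1 : ℝ))
    (hSk : ∀ k : Fin (d + 1), k ≠ 0 → S k 1 1 1 = 0)
    (F : Fin (d + 1) → Matrix (Fin (d + 1)) (Fin (d + 1)) ℝ)
    (hF : ∀ k, (F k).PosSemidef)
    (hc : ∀ u : ℝ, -1 ≤ u → u ≤ s →
      (∑ k : Fin (d + 1), ∑ i, ∑ j, F k i j * S k u u 1 i j) ≤ -1/3)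
    (hd : ∀ u v t : ℝ, -1 ≤ u → u ≤ s → -1 ≤ v → v ≤ s → -1 ≤ t → t ≤ s →
      (∑ k : Fin (d + 1), ∑ i, ∑ j, F k i j * S k u v t i j) ≤ 0)
    (C : Finset (Fin n → ℝ))
    (hCsphere : ∀ x ∈ C, ∑ i, x i * x i = 1)
    (hCdist : ∀ x ∈ C, ∀ y ∈ C, x ≠ y → ∑ i, x i * y i ≤ s) :
    (C.card : ℝ) ≤ 1 + ∑ i, ∑ j, F 0 i j := by
  classical
  rcases C.eq_empty_or_nonempty with rfl | hC
  · simpa using add_nonneg zero_le_one (hF 0).sum_apply_nonneg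
  let Ψ : ℝ → ℝ → ℝ → ℝ := fun u v t => ∑ k, ∑ i, ∑ j, F k i j * S k u v t i j
  have hΨ : ∀ u v t, Ψ u v t = Ψ v t u := fun u v t => by simp only [Ψ, (hsym _ u v t).1]
  have hunit : ∀ x ∈ C, x ⬝ᵥ x = 1 := hCsphere
  have hrange : ∀ x ∈ C, ∀ y ∈ C, x ≠ y → -1 ≤ x ⬝ᵥ y ∧ x ⬝ᵥ y ≤ s := fun x hx y hy hxy =>
    ⟨neg_one_le_dotProduct (hunit x hx) (hunit y hy), hCdist x hx y hy hxy⟩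
  refine card_le_of_sum_triples_nonneg hC (Φ := fun x y z => Ψ (x ⬝ᵥ y) (y ⬝ᵥ z) (z ⬝ᵥ x))
    (fun x y z => hΨ _ _ _) (fun x hx => ?_) (fun x hx y hy hxy => ?_)
    (fun x hx y hy z hz hxy hyz hzx => ?_) ?_
  · simp only [hunit x hx, Ψ]
    rw [sum_eq_single (0 : Fin (d + 1)) (fun k _ hk => by simp [hSk k hk]) (by simp), hS0]
    simp
  · obtain ⟨hlow, hhigh⟩ := hrange x hx y hy hxy
    simp only [hunit x hx, dotProduct_comm y x]
    rw [hΨ]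
    exact hc _ hlow hhigh
  · exact hd _ _ _ (hrange x hx y hy hxy).1 (hrange x hx y hy hxy).2 (hrange y hy z hz hyz).1
      (hrange y hy z hz hyz).2 (hrange z hz x hx hzx).1 (hrange z hz x hx hzx).2
  · exact sum_triples_sum_mul_apply_nonneg hF C _ (hpsd3 C hCsphere)

/-- The semidefinite programming bound of Bachoc–Vallentin for
spherical codes: if matrices `F 0, …, F d` are positive semidefinite and
satisfy the constraints (c) and (d) with respect to symmetric matrix-valued
functions `S k` satisfying (a) and (b), then every spherical code in `S^{n-1}`
with inner products at most `s` has at most `1 + ⟨F 0, J⟩` elements. -/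
theorem sdp_bound_spherical_codes {n d : ℕ} (hn : 2 ≤ n) (s : ℝ)
    (hs : -1 ≤ s) (hs' : s < 1)
    (S : Fin (d + 1) → ℝ → ℝ → ℝ → Matrix (Fin (d + 1)) (Fin (d + 1)) ℝ)
    (hsym : ∀ (k : Fin (d + 1)) (u v t : ℝ),
      S k u v t = S k v t u ∧ S k u v t = S k u t v)
    (hpsd3 : ∀ (C : Finset (Fin n → ℝ)), (∀ x ∈ C, ∑ i, x i * x i = 1) →
      ∀ k : Fin (d + 1),
        (∑ x ∈ C, ∑ y ∈ C, ∑ z ∈ C,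
          S k (∑ i, x i * y i) (∑ i, y i * z i) (∑ i, z i * x i)).PosSemidef)
    (hS0 : S 0 1 1 1 = Matrix.of fun _ _ => (1 : ℝ))
    (hSk : ∀ k : Fin (d + 1), k ≠ 0 → S k 1 1 1 = 0)
    (F : Fin (d + 1) → Matrix (Fin (d + 1)) (Fin (d + 1)) ℝ)
    (hF : ∀ k, (F k).PosSemidef)
    (hc : ∀ u : ℝ, -1 ≤ u → u ≤ s →
      (∑ k : Fin (d + 1), ∑ i, ∑ j, F k i j * S k u u 1 i j) ≤ -1/3)
    (hd : ∀ u v t : ℝ, -1 ≤ u → u ≤ s → -1 ≤ v → v ≤ s → -1 ≤ t → t ≤ s →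
      (∑ k : Fin (d + 1), ∑ i, ∑ j, F k i j * S k u v t i j) ≤ 0)
    (C : Finset (Fin n → ℝ))
    (hCsphere : ∀ x ∈ C, ∑ i, x i * x i = 1)
    (hCdist : ∀ x ∈ C, ∀ y ∈ C, x ≠ y → ∑ i, x i * y i ≤ s) :
    (C.card : ℝ) ≤ 1 + ∑ i, ∑ j, F 0 i j :=
  sdp_bound_spherical_codes_general s S hsym hpsd3 hS0 hSk F hF hc hd C hCsphere hCdist
end
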